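/- Let N, n, k be positive integers, let Φ, Ψ ∈ ℝ^{N×n} with ΨᵀΦ invertible, let w⁰ ∈ ℝ^N, let f : ℝ^N × ℝ → ℝ^N, let h > 0, let α₀,…,α_k and β₀,…,β_k be real coefficients satisfying the consistency condition Σ_{j=0}^k α_j = 0, and let x̂^{n−k},…,x̂ⁿ ∈ ℝⁿ and times t^{n−k},…,tⁿ ∈ ℝ be given. Then the implicit linear k-step relation for the projected reduced ODE, Σ_{j=0}^k α_j x̂^{n−j} = h Σ_{j=0}^k β_j (ΨᵀΦ)⁻¹ Ψᵀ f(w⁰ + Φ x̂^{n−j}, t^{n−j}), holds if and only if the full-order linear-multistep residual evaluated at the reduced approximations is orthogonal to the test subspace, i.e., Ψᵀ [ Σ_{j=0}^k α_j (w⁰ + Φ x̂^{n−j}) − h Σ_{j=0}^k β_j f(w⁰ + Φ x̂^{n−j}, t^{n−j}) ] = 0. Hence, for implicit linear multistep schemes, 'project then discretize in time' and 'discretize in time then project' produce the same reduced system of nonlinear equations. -/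

import Mathlib

open Matrix

lemma mulVec_finset_sum {m p ι : Type*} [Fintype p] (M : Matrix m p ℝ)
    (s : Finset ι) (v : ι → p → ℝ) :
    M *ᵥ (∑ j ∈ s, v j) = ∑ j ∈ s, M *ᵥ v j := by
  simp only [← Matrix.mulVecLin_apply, map_sum]

/-- For implicit linear multistep schemes, "project then discretize" and
"discretize then project" yield the same reduced system of nonlinear equations. -/
theorem linear_multistep_project_discretize_commute
    (N n k : ℕ) (hN : 0 < N) (hn : 0 < n) (hk : 0 < k)
    (Φ Ψ : Matrix (Fin N) (Fin n) ℝ)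
    (hinv : IsUnit (Ψᵀ * Φ).det)
    (w0 : Fin N → ℝ)
    (f : (Fin N → ℝ) → ℝ → (Fin N → ℝ))
    (h : ℝ) (hh : 0 < h)
    (a b : Fin (k + 1) → ℝ)
    (hcons : ∑ j, a j = 0)
    (xh : Fin (k + 1) → (Fin n → ℝ))
    (t : Fin (k + 1) → ℝ) :
    (∑ j, a j • xh j
        = h • ∑ j, b j • (((Ψᵀ * Φ)⁻¹ * Ψᵀ) *ᵥ f (w0 + Φ *ᵥ xh j) (t j)))
      ↔
    (Ψᵀ *ᵥ (∑ j, a j • (w0 + Φ *ᵥ xh j)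
        - h • ∑ j, b j • f (w0 + Φ *ᵥ xh j) (t j)) = 0) := by
  set A := Ψᵀ * Φ with hA
  have hAinv : A⁻¹ * A = 1 := Matrix.nonsing_inv_mul A hinv
  have hAinv' : A * A⁻¹ = 1 := Matrix.mul_nonsing_inv A hinv
  set S : Fin n → ℝ := ∑ j, a j • xh j with hS
  set F : Fin N → ℝ := ∑ j, b j • f (w0 + Φ *ᵥ xh j) (t j) with hF
  have hsum : (∑ j, a j • (w0 + Φ *ᵥ xh j)) = Φ *ᵥ S := by
    have h1 : (∑ j, a j • (w0 + Φ *ᵥ xh j))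
        = (∑ j, a j) • w0 + ∑ j, a j • (Φ *ᵥ xh j) := by
      rw [Finset.sum_smul, ← Finset.sum_add_distrib]
      simp [smul_add]
    rw [h1, hcons, zero_smul, zero_add, hS, mulVec_finset_sum]
    congr 1; ext j
    rw [Matrix.mulVec_smul]
  have hlhs : (h • ∑ j, b j • ((A⁻¹ * Ψᵀ) *ᵥ f (w0 + Φ *ᵥ xh j) (t j)))
      = h • ((A⁻¹ * Ψᵀ) *ᵥ F) := by
    rw [hF, mulVec_finset_sum]
    congr 1
    exact Finset.sum_congr rfl fun j _ => (Matrix.mulVec_smul _ _ _).symm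
  rw [hlhs, Matrix.mulVec_sub, hsum, Matrix.mulVec_mulVec, ← hA, sub_eq_zero]
  constructor
  · intro hEq
    rw [hEq, Matrix.mulVec_smul, Matrix.mulVec_mulVec, ← Matrix.mul_assoc,
      hAinv', Matrix.one_mul, Matrix.mulVec_smul]
  · intro hEq
    rw [Matrix.mulVec_smul] at hEq
    have : A⁻¹ *ᵥ (A *ᵥ S) = A⁻¹ *ᵥ (h • (Ψᵀ *ᵥ F)) := by rw [hEq]
    rw [Matrix.mulVec_mulVec, hAinv, Matrix.one_mulVec, Matrix.mulVec_smul,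
      Matrix.mulVec_mulVec] at this
    exact this
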